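/- Let A be an m×n real matrix, b ∈ ℝᵐ, λ > 0, p ≥ 1, σ > 0, and define H_{p,σ}(x) = ‖Ax − b‖₂² + λ·∑_{k=1}^n φ_σ(x_k)^p for x ∈ ℝⁿ. Then H_{p,σ} is differentiable on ℝⁿ with gradient ∇H_{p,σ}(x) = 2Aᵀ(Ax − b) + λ·p·v(x), where v(x) ∈ ℝⁿ has components v_j(x) = φ_σ(x_j)^{p−1}·erf(x_j/(√2·σ)). -/

import Mathlib

open Real Matrix

/-- The error function `erf(t) = (2/√π)·∫₀ᵗ exp(−u²) du`. -/
noncomputable def erf (t : ℝ) : ℝ := (2 / Real.sqrt π) * ∫ u in (0 : ℝ)..t, Real.exp (-u ^ 2)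

/-- The smoothed absolute value `φ_σ(t) = t·erf(t/(√2·σ)) + √(2/π)·σ·exp(−t²/(2σ²))`. -/
noncomputable def phi (σ t : ℝ) : ℝ :=
  t * erf (t / (Real.sqrt 2 * σ)) + Real.sqrt (2 / π) * σ * Real.exp (-t ^ 2 / (2 * σ ^ 2))

/-!
Differentiating the definition, the Gaussian part of `φ_σ` cancels the `t · erf'` term of the
product rule, so `φ_σ'(t) = erf(t/(√2σ))`. Since `φ_σ > 0` (as `t · erf t ≥ 0`, erf being
increasing with `erf 0 = 0`), the real power `φ_σ ^ p` is differentiable by the chain rule.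
Writing each differential as `y ↦ g ⬝ᵥ y`, the least-squares part has gradient `2Aᵀ(Ax − b)` and
the separable penalty has gradient `λ p (φ_σ(x_k)^{p−1} erf(x_k/(√2σ)))_k`; evaluating at
`Pi.single j 1` reads off the `j`-th component.
-/

theorem hasDerivAt_erf (t : ℝ) : HasDerivAt erf (2 / √π * exp (-t ^ 2)) t :=
  ((continuous_exp.comp (continuous_pow 2).neg).integral_hasStrictDerivAt 0 t).hasDerivAt
    |>.const_mul _

theorem erf_zero : erf 0 = 0 := by simp [erf]

theorem monotone_erf : Monotone erf :=
  monotone_of_hasDerivAt_nonneg hasDerivAt_erf fun _ => by positivity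

theorem mul_erf_nonneg (t : ℝ) : 0 ≤ t * erf t := by
  rcases le_total 0 t with ht | ht
  · exact mul_nonneg ht (erf_zero ▸ monotone_erf ht)
  · exact mul_nonneg_of_nonpos_of_nonpos ht (erf_zero ▸ monotone_erf ht)

theorem phi_pos {σ : ℝ} (hσ : 0 < σ) (t : ℝ) : 0 < phi σ t := by
  set s := t / (√2 * σ)
  have hts : t = √2 * σ * s := by simp only [s]; field_simp
  have hlin : 0 ≤ t * erf s := by
    rw [hts, mul_assoc]
    exact mul_nonneg (by positivity) (mul_erf_nonneg s)
  have hgauss : 0 < √(2 / π) * σ * exp (-t ^ 2 / (2 * σ ^ 2)) := by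
    have : 0 < √(2 / π) := sqrt_pos.2 (by positivity)
    positivity
  exact add_pos_of_nonneg_of_pos hlin hgauss

theorem hasDerivAt_phi {σ : ℝ} (hσ : 0 < σ) (t : ℝ) :
    HasDerivAt (phi σ) (erf (t / (√2 * σ))) t := by
  have hlin : HasDerivAt (fun t => t * erf (t / (√2 * σ)))
      (erf (t / (√2 * σ)) + t * (2 / √π * exp (-(t / (√2 * σ)) ^ 2) / (√2 * σ))) t := by
    refine ((hasDerivAt_id' t).fun_mul
      ((hasDerivAt_erf _).comp t ((hasDerivAt_id' t).div_const (√2 * σ)))).congr_deriv ?_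
    simp only [Function.comp_apply]
    ring
  have hgauss : HasDerivAt (fun t => √(2 / π) * σ * exp (-t ^ 2 / (2 * σ ^ 2)))
      (-(√(2 / π) / σ * t * exp (-t ^ 2 / (2 * σ ^ 2)))) t := by
    refine ((((hasDerivAt_pow 2 t).fun_neg).div_const (2 * σ ^ 2)).exp.const_mul
      (√(2 / π) * σ)).congr_deriv ?_
    field_simp
    ring
  refine (hlin.add hgauss).congr_deriv ?_
  have hsq : (t / (√2 * σ)) ^ 2 = t ^ 2 / (2 * σ ^ 2) := by
    rw [div_pow, mul_pow, sq_sqrt zero_le_two]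
  have hcoef : 2 / √π / (√2 * σ) = √(2 / π) / σ := by
    rw [sqrt_div zero_le_two]
    field_simp
    exact (sq_sqrt zero_le_two).symm
  rw [hsq, ← neg_div]
  linear_combination (t * exp (-t ^ 2 / (2 * σ ^ 2))) * hcoef

theorem hasDerivAt_phi_rpow {σ : ℝ} (hσ : 0 < σ) (p t : ℝ) :
    HasDerivAt (fun t => phi σ t ^ p) (p * phi σ t ^ (p - 1) * erf (t / (√2 * σ))) t := by
  convert (hasDerivAt_phi hσ t).rpow_const (p := p) (Or.inl (phi_pos hσ t).ne') using 1
  ring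

section Gradient

variable {ι : Type*} [Fintype ι]

/-- The differential on `ι → ℝ` whose gradient is `c`. -/
noncomputable def dotProductCLM (c : ι → ℝ) : (ι → ℝ) →L[ℝ] ℝ :=
  ∑ k, c k • ContinuousLinearMap.proj k

@[simp]
theorem dotProductCLM_apply (c y : ι → ℝ) : dotProductCLM c y = c ⬝ᵥ y := by
  simp [dotProductCLM, dotProduct]

theorem hasFDerivAt_dotProduct (c x : ι → ℝ) :
    HasFDerivAt (fun y => c ⬝ᵥ y) (dotProductCLM c) x := by
  have hc : (fun y => c ⬝ᵥ y) = dotProductCLM c := funext fun y => (dotProductCLM_apply c y).symm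
  exact hc ▸ (dotProductCLM c).hasFDerivAt

theorem hasFDerivAt_sum_comp_apply {g g' : ℝ → ℝ} (hg : ∀ t, HasDerivAt g (g' t) t)
    (x : ι → ℝ) :
    HasFDerivAt (fun x : ι → ℝ => ∑ k, g (x k)) (dotProductCLM fun k => g' (x k)) x := by
  have hk : ∀ k, HasFDerivAt (fun x : ι → ℝ => g (x k)) (g' (x k) • ContinuousLinearMap.proj k) x :=
    fun k => (hg (x k)).comp_hasFDerivAt x (hasFDerivAt_apply (𝕜 := ℝ) k x)
  exact HasFDerivAt.fun_sum fun k _ => hk k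

theorem hasFDerivAt_sum_sq_mulVec_sub {κ : Type*} [Fintype κ] (A : Matrix κ ι ℝ) (b : κ → ℝ)
    (x : ι → ℝ) :
    HasFDerivAt (fun x => ∑ i, ((A *ᵥ x - b) i) ^ 2)
      (dotProductCLM (2 • Aᵀ *ᵥ (A *ᵥ x - b))) x := by
  have hi : ∀ i, HasFDerivAt (fun x => ((A *ᵥ x - b) i) ^ 2)
      ((2 * (A *ᵥ x - b) i) • dotProductCLM (A i)) x := by
    intro i
    simpa only [Pi.sub_apply, mulVec, Nat.cast_ofNat, Nat.add_one_sub_one, pow_one, nsmul_eq_mul]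
      using ((hasFDerivAt_dotProduct (A i) x).sub_const (b i)).pow 2
  refine (HasFDerivAt.fun_sum fun i _ => hi i).congr_fderiv ?_
  ext y
  simp only [_root_.sum_apply, _root_.smul_apply, dotProductCLM_apply, dotProduct, mulVec,
    Pi.sub_apply, Pi.mul_apply, Pi.ofNat_apply, transpose_apply, smul_eq_mul,
    nsmul_eq_mul, Nat.cast_ofNat, Finset.mul_sum, Finset.sum_mul]
  rw [Finset.sum_comm]
  exact Finset.sum_congr rfl fun _ _ => Finset.sum_congr rfl fun _ _ => by ring

end Gradient

theorem H_gradient_general {m n : ℕ} (A : Matrix (Fin m) (Fin n) ℝ) (b : Fin m → ℝ)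
    (lam p σ : ℝ) (hσ : 0 < σ)
    (H : (Fin n → ℝ) → ℝ)
    (hH : ∀ x, H x = (∑ i, ((A.mulVec x - b) i) ^ 2) + lam * ∑ k, phi σ (x k) ^ p) :
    Differentiable ℝ H ∧
    ∀ (x : Fin n → ℝ) (j : Fin n),
      fderiv ℝ H x (Pi.single j 1)
        = 2 * (Aᵀ.mulVec (A.mulVec x - b)) j
          + lam * p * (phi σ (x j) ^ (p - 1) * erf (x j / (Real.sqrt 2 * σ))) := by
  have hderiv : ∀ x, HasFDerivAt H (dotProductCLM (2 • Aᵀ *ᵥ (A *ᵥ x - b) +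
      lam • fun k => p * phi σ (x k) ^ (p - 1) * erf (x k / (√2 * σ)))) x := by
    intro x
    rw [funext hH]
    refine ((hasFDerivAt_sum_sq_mulVec_sub A b x).add
      ((hasFDerivAt_sum_comp_apply (hasDerivAt_phi_rpow hσ p) x).const_mul lam)).congr_fderiv ?_
    ext y
    simp [add_dotProduct, smul_dotProduct]
  refine ⟨fun x => (hderiv x).differentiableAt, fun x j => ?_⟩
  rw [(hderiv x).fderiv, dotProductCLM_apply, dotProduct_single_one]
  simp only [Pi.add_apply, Pi.smul_apply, smul_eq_mul]
  ring

/-- The functional `H_{p,σ}(x) = ‖Ax − b‖₂² + λ·∑ₖ φ_σ(xₖ)^p` is differentiable on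
`ℝⁿ` with gradient `∇H_{p,σ}(x) = 2Aᵀ(Ax − b) + λ·p·v(x)`, where
`v_j(x) = φ_σ(x_j)^{p−1}·erf(x_j/(√2·σ))`. -/
theorem H_gradient {m n : ℕ} (A : Matrix (Fin m) (Fin n) ℝ) (b : Fin m → ℝ)
    (lam p σ : ℝ) (hlam : 0 < lam) (hp : 1 ≤ p) (hσ : 0 < σ)
    (H : (Fin n → ℝ) → ℝ)
    (hH : ∀ x, H x = (∑ i, ((A.mulVec x - b) i) ^ 2) + lam * ∑ k, phi σ (x k) ^ p) :
    Differentiable ℝ H ∧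
    ∀ (x : Fin n → ℝ) (j : Fin n),
      fderiv ℝ H x (Pi.single j 1)
        = 2 * (Aᵀ.mulVec (A.mulVec x - b)) j
          + lam * p * (phi σ (x j) ^ (p - 1) * erf (x j / (Real.sqrt 2 * σ))) :=
  H_gradient_general A b lam p σ hσ H hH
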